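/- arXiv:1606.08080 — 4 statements merged into one kernel-verified Lean document; each statement's English description precedes it below -/
import Mathlib

section
/- Let X be a set, T : X → X a bijection, k ≥ 1, and A_0, A_1, …, A_k ⊆ X sets such that the 2(k+1) sets A_0, …, A_k, T(A_0), …, T(A_k) are pairwise disjoint. Then the composition T_{A_0 ∪ A_1} ∘ T_{A_1 ∪ A_2} ∘ ⋯ ∘ T_{A_{k-1} ∪ A_k} equals T_{A_0} ∘ T_{A_k}. -/
open MeasureTheory Set

/- For a bijection `T : X → X` and a set `A ⊆ X` with `A ∩ T(A) = ∅`, the involution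
`T_A : X → X` sends `x ↦ T x` on `A`, `x ↦ T⁻¹ x` on `T '' A`, and is the identity
elsewhere. -/
open Classical in
noncomputable def invol {X : Type*} (T : Equiv.Perm X) (A : Set X) : X → X :=
  fun x => if x ∈ A then T x else if x ∈ ⇑T '' A then T.symm x else x

lemma invol_of_mem {X : Type*} (T : Equiv.Perm X) (A : Set X) {x : X} (h : x ∈ A) :
    invol T A x = T x := by unfold invol; rw [if_pos h]

lemma invol_of_img {X : Type*} (T : Equiv.Perm X) (A : Set X) {x : X} (h1 : x ∉ A)
    (h2 : x ∈ ⇑T '' A) : invol T A x = T.symm x := by unfold invol; rw [if_neg h1, if_pos h2]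

lemma invol_of_not {X : Type*} (T : Equiv.Perm X) (A : Set X) {x : X} (h1 : x ∉ A)
    (h2 : x ∉ ⇑T '' A) : invol T A x = x := by unfold invol; rw [if_neg h1, if_neg h2]

lemma invol_sq {X : Type*} (T : Equiv.Perm X) (A : Set X) (h : Disjoint A (⇑T '' A)) :
    invol T A ∘ invol T A = id := by
  funext x
  simp only [Function.comp, id]
  by_cases hx : x ∈ A
  · have h1 : T x ∈ ⇑T '' A := mem_image_of_mem _ hx
    have h2 : T x ∉ A := fun hh => Set.disjoint_left.1 h hh h1
    rw [invol_of_mem T A hx, invol_of_img T A h2 h1, Equiv.symm_apply_apply]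
  · by_cases hx2 : x ∈ ⇑T '' A
    · have h1 : T.symm x ∈ A := by obtain ⟨a, ha, rfl⟩ := hx2; simpa
      rw [invol_of_img T A hx hx2, invol_of_mem T A h1, Equiv.apply_symm_apply]
    · rw [invol_of_not T A hx hx2, invol_of_not T A hx hx2]

lemma invol_union {X : Type*} (T : Equiv.Perm X) (A B : Set X)
    (hAB : Disjoint A B) (hAtA : Disjoint A (⇑T '' A)) (hAtB : Disjoint A (⇑T '' B))
    (hBtA : Disjoint B (⇑T '' A)) (hBtB : Disjoint B (⇑T '' B))
    (htAtB : Disjoint (⇑T '' A) (⇑T '' B)) :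
    invol T (A ∪ B) = invol T A ∘ invol T B := by
  funext x
  simp only [Function.comp]
  by_cases hxB : x ∈ B
  · have h1 : T x ∈ ⇑T '' B := mem_image_of_mem _ hxB
    have h2 : T x ∉ A := fun hh => Set.disjoint_left.1 hAtB hh h1
    have h3 : T x ∉ ⇑T '' A := fun hh => Set.disjoint_left.1 htAtB hh h1
    rw [invol_of_mem T _ (Set.mem_union_right _ hxB), invol_of_mem T B hxB,
      invol_of_not T A h2 h3]
  · by_cases hxtB : x ∈ ⇑T '' B
    · have h0 : x ∉ A := fun hh => Set.disjoint_left.1 hAtB hh hxtB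
      have h0' : x ∉ A ∪ B := fun hh => hh.elim h0 hxB
      have h1 : T.symm x ∈ B := by obtain ⟨a, ha, rfl⟩ := hxtB; simpa
      have h2 : T.symm x ∉ A := fun hh => Set.disjoint_left.1 hAB hh h1
      have h3 : T.symm x ∉ ⇑T '' A := fun hh => Set.disjoint_left.1 hBtA h1 hh
      have h4 : x ∈ ⇑T '' (A ∪ B) := by
        rw [Set.image_union]; exact Set.mem_union_right _ hxtB
      rw [invol_of_img T _ h0' h4, invol_of_img T B hxB hxtB, invol_of_not T A h2 h3]
    · rw [invol_of_not T B hxB hxtB]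
      by_cases hxA : x ∈ A
      · rw [invol_of_mem T _ (Set.mem_union_left _ hxA), invol_of_mem T A hxA]
      · by_cases hxtA : x ∈ ⇑T '' A
        · have h0' : x ∉ A ∪ B := fun hh => hh.elim hxA hxB
          have h4 : x ∈ ⇑T '' (A ∪ B) := by
            rw [Set.image_union]; exact Set.mem_union_left _ hxtA
          rw [invol_of_img T _ h0' h4, invol_of_img T A hxA hxtA]
        · have h0' : x ∉ A ∪ B := fun hh => hh.elim hxA hxB
          have h4 : x ∉ ⇑T '' (A ∪ B) := by
            rw [Set.image_union]; exact fun hh => hh.elim hxtA hxtB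
          rw [invol_of_not T _ h0' h4, invol_of_not T A hxA hxtA]

lemma stmt3_aux {X : Type*} (T : Equiv.Perm X) : ∀ (k : ℕ), 1 ≤ k → ∀ (A : ℕ → Set X),
    (∀ i ≤ k, ∀ j ≤ k, i ≠ j → Disjoint (A i) (A j)) →
    (∀ i ≤ k, ∀ j ≤ k, Disjoint (A i) (⇑T '' A j)) →
    (∀ i ≤ k, ∀ j ≤ k, i ≠ j → Disjoint (⇑T '' A i) (⇑T '' A j)) →
    ((List.range k).map (fun i => invol T (A i ∪ A (i + 1)))).foldr (· ∘ ·) id =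
      invol T (A 0) ∘ invol T (A k) := by
  intro k
  induction k with
  | zero => omega
  | succ n ih =>
    intro _ A hAA hAT hTT
    have hu01 : invol T (A 0 ∪ A 1) = invol T (A 0) ∘ invol T (A 1) :=
      invol_union T _ _ (hAA 0 (by omega) 1 (by omega) (by omega))
        (hAT 0 (by omega) 0 (by omega)) (hAT 0 (by omega) 1 (by omega))
        (hAT 1 (by omega) 0 (by omega)) (hAT 1 (by omega) 1 (by omega))
        (hTT 0 (by omega) 1 (by omega) (by omega))
    rcases Nat.eq_zero_or_pos n with hn | hn
    · subst hn
      simp [List.range_succ, hu01]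
    · have key : ((List.range n).map (fun i => invol T (A (i+1) ∪ A (i + 1 + 1)))).foldr
          (· ∘ ·) id = invol T (A 1) ∘ invol T (A (n+1)) :=
        ih hn (fun i => A (i+1))
          (fun i hi j hj hij => hAA (i+1) (by omega) (j+1) (by omega) (by omega))
          (fun i hi j hj => hAT (i+1) (by omega) (j+1) (by omega))
          (fun i hi j hj hij => hTT (i+1) (by omega) (j+1) (by omega) (by omega))
    
      have hr : List.range (n+1) = 0 :: (List.range n).map (· + 1) := by
        rw [List.range_succ_eq_map]
      rw [hr]
      simp only [List.map_cons, List.map_map, List.foldr_cons]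
      have h2 : ((List.range n).map ((fun i => invol T (A i ∪ A (i + 1))) ∘ (· + 1))).foldr
          (· ∘ ·) id = invol T (A 1) ∘ invol T (A (n+1)) := key
      rw [h2, hu01]
      rw [Function.comp_assoc]
      rw [← Function.comp_assoc (invol T (A 1))]
      rw [invol_sq T (A 1) (hAT 1 (by omega) 1 (by omega))]
      simp

theorem stmt3 {X : Type*} (T : Equiv.Perm X) (k : ℕ) (hk : 1 ≤ k) (A : ℕ → Set X)
    (hAA : ∀ i ≤ k, ∀ j ≤ k, i ≠ j → Disjoint (A i) (A j))
    (hAT : ∀ i ≤ k, ∀ j ≤ k, Disjoint (A i) (⇑T '' A j))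
    (hTT : ∀ i ≤ k, ∀ j ≤ k, i ≠ j → Disjoint (⇑T '' A i) (⇑T '' A j)) :
    ((List.range k).map (fun i => invol T (A i ∪ A (i + 1)))).foldr (· ∘ ·) id =
      invol T (A 0) ∘ invol T (A k) := by
  exact stmt3_aux T k hk A hAA hAT hTT
end

section
/- Let α, β, ε be real numbers with 0 < ε < β, β + ε < α, α + β + ε < 1, and let T : ℝ/ℤ → ℝ/ℤ be the rotation T(x) = x + α. Then, viewing [0,β), [ε, β+ε), and [0,ε) ∪ [β, β+ε) as subsets of ℝ/ℤ (each of which is disjoint from its image under T), one has T_{[0,β)} ∘ T_{[ε, β+ε)} = T_{[0,ε) ∪ [β, β+ε)}. -/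
open MeasureTheory Set

lemma mem_img {t a b : ℝ} (ht : t ∈ Ico (0:ℝ) 1) (ha : 0 ≤ a) (hb : b ≤ 1) :
    (↑t : UnitAddCircle) ∈ ((↑·) : ℝ → UnitAddCircle) '' Ico a b ↔ t ∈ Ico a b := by
  constructor
  · rintro ⟨y, hy, hyc⟩
    have hy' : y ∈ Ico (0:ℝ) (0 + 1) := by
      simp only [zero_add]
      exact ⟨ha.trans hy.1, lt_of_lt_of_le hy.2 hb⟩
    have ht' : t ∈ Ico (0:ℝ) (0 + 1) := by simpa using ht
    rw [AddCircle.coe_eq_coe_iff_of_mem_Ico hy' ht'] at hyc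
    exact hyc ▸ hy
  · exact fun h => ⟨t, h, rfl⟩

theorem stmt6 (α β ε : ℝ) (hε : 0 < ε) (hεβ : ε < β) (hβε : β + ε < α)
    (hα1 : α + β + ε < 1)
    (T : Equiv.Perm UnitAddCircle) (hT : ⇑T = fun x => x + (α : UnitAddCircle)) :
    invol T (((↑·) : ℝ → UnitAddCircle) '' Ico 0 β) ∘
        invol T (((↑·) : ℝ → UnitAddCircle) '' Ico ε (β + ε)) =
      invol T ((((↑·) : ℝ → UnitAddCircle) '' Ico 0 ε) ∪
        (((↑·) : ℝ → UnitAddCircle) '' Ico β (β + ε))) := by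
  have hTa : ∀ u : ℝ, T ↑u = ↑(u + α) := by
    intro u; rw [hT, AddCircle.coe_add]
  have hTs : ∀ u : ℝ, T.symm ↑u = ↑(u - α) := by
    intro u
    apply T.injective
    rw [Equiv.apply_symm_apply, hTa]
    congr 1; ring
  have hTimg : ∀ a b : ℝ,
      ⇑T '' (((↑·) : ℝ → UnitAddCircle) '' Ico a b) =
        ((↑·) : ℝ → UnitAddCircle) '' Ico (a + α) (b + α) := by
    intro a b
    ext z
    constructor
    · rintro ⟨_, ⟨u, hu, rfl⟩, rfl⟩
      exact ⟨u + α, ⟨by linarith [hu.1], by linarith [hu.2]⟩, (hTa u).symm⟩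
    · rintro ⟨v, hv, rfl⟩
      refine ⟨↑(v - α), ⟨v - α, ⟨by linarith [hv.1], by linarith [hv.2]⟩, rfl⟩, ?_⟩
      rw [hTa]; congr 1; ring
  funext x
  obtain ⟨t, ht, rfl⟩ : ∃ t ∈ Ico (0:ℝ) 1, ((t : ℝ) : UnitAddCircle) = x := by
    have hx : x ∈ ((↑) : ℝ → UnitAddCircle) '' Ico 0 (0 + 1) := by
      rw [AddCircle.coe_image_Ico_eq]; trivial
    obtain ⟨t, h1, h2⟩ := hx
    exact ⟨t, by simpa using h1, h2⟩
  have ht0 := ht.1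
  have ht1 := ht.2
  have mi : ∀ {u a b : ℝ}, a ≤ u → u < b →
      (↑u : UnitAddCircle) ∈ ((↑·) : ℝ → UnitAddCircle) '' Ico a b :=
    fun {u a b} h1 h2 => ⟨u, ⟨h1, h2⟩, rfl⟩
  have ni : ∀ {u a b : ℝ}, u ∈ Ico (0:ℝ) 1 → 0 ≤ a → b ≤ 1 → (u < a ∨ b ≤ u) →
      (↑u : UnitAddCircle) ∉ ((↑·) : ℝ → UnitAddCircle) '' Ico a b := by
    rintro u a b hu ha hb h hm
    obtain ⟨h1, h2⟩ := (mem_img hu ha hb).mp hm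
    rcases h with h | h <;> linarith
  -- compute invol on a coe-image of an Ico
  have ivP : ∀ (u a b : ℝ), a ≤ u → u < b →
      invol T (((↑·) : ℝ → UnitAddCircle) '' Ico a b) ↑u = ↑(u + α) := by
    intro u a b h1 h2
    simp only [invol]
    rw [if_pos (mi h1 h2), hTa]
  have ivS : ∀ (u a b : ℝ), u ∈ Ico (0:ℝ) 1 → 0 ≤ a → b ≤ 1 → (u < a ∨ b ≤ u) →
      a + α ≤ u → u < b + α →
      invol T (((↑·) : ℝ → UnitAddCircle) '' Ico a b) ↑u = ↑(u - α) := by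
    intro u a b hu ha hb h h1 h2
    simp only [invol]
    rw [if_neg (ni hu ha hb h), hTimg, if_pos (mi h1 h2), hTs]
  have hα0 : (0:ℝ) < α := by linarith
  have ivI : ∀ (u a b : ℝ), u ∈ Ico (0:ℝ) 1 → 0 ≤ a → b ≤ 1 → b + α ≤ 1 → (u < a ∨ b ≤ u) →
      (u < a + α ∨ b + α ≤ u) →
      invol T (((↑·) : ℝ → UnitAddCircle) '' Ico a b) ↑u = ↑u := by
    intro u a b hu ha hb hb' h h'
    simp only [invol]
    rw [if_neg (ni hu ha hb h), hTimg, if_neg (ni hu (by linarith) hb' h')]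
  simp only [Function.comp_apply]
  -- abbreviations for the RHS resolution
  have r3P : ∀ u : ℝ, (u < ε ∧ 0 ≤ u) ∨ (β ≤ u ∧ u < β + ε) →
      invol T ((((↑·) : ℝ → UnitAddCircle) '' Ico 0 ε) ∪
        (((↑·) : ℝ → UnitAddCircle) '' Ico β (β + ε))) ↑u = ↑(u + α) := by
    intro u h
    have hmem : (↑u : UnitAddCircle) ∈ (((↑·) : ℝ → UnitAddCircle) '' Ico 0 ε) ∪
        (((↑·) : ℝ → UnitAddCircle) '' Ico β (β + ε)) := by
      rcases h with ⟨h1, h2⟩ | ⟨h1, h2⟩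
      · exact mem_union_left _ (mi h2 h1)
      · exact mem_union_right _ (mi h1 h2)
    simp only [invol]
    rw [if_pos hmem, hTa]
  have r3S : ∀ u : ℝ, (u ∈ Ico (0:ℝ) 1) → ((0 + α ≤ u ∧ u < ε + α) ∨ (β + α ≤ u ∧ u < β + ε + α)) →
      invol T ((((↑·) : ℝ → UnitAddCircle) '' Ico 0 ε) ∪
        (((↑·) : ℝ → UnitAddCircle) '' Ico β (β + ε))) ↑u = ↑(u - α) := by
    intro u hu h
    have hna : (↑u : UnitAddCircle) ∉ (((↑·) : ℝ → UnitAddCircle) '' Ico 0 ε) ∪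
        (((↑·) : ℝ → UnitAddCircle) '' Ico β (β + ε)) := by
      rintro (hm | hm)
      · exact ni hu le_rfl (by linarith)
          (Or.inr (by rcases h with ⟨h1, h2⟩ | ⟨h1, h2⟩ <;> linarith)) hm
      · exact ni hu (by linarith) (by linarith)
          (Or.inr (by rcases h with ⟨h1, h2⟩ | ⟨h1, h2⟩ <;> linarith)) hm
    have hTA : (↑u : UnitAddCircle) ∈ ⇑T '' ((((↑·) : ℝ → UnitAddCircle) '' Ico 0 ε) ∪
        (((↑·) : ℝ → UnitAddCircle) '' Ico β (β + ε))) := by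
      rw [image_union, hTimg, hTimg]
      rcases h with ⟨h1, h2⟩ | ⟨h1, h2⟩
      · exact mem_union_left _ (mi h1 h2)
      · exact mem_union_right _ (mi h1 h2)
    simp only [invol]
    rw [if_neg hna, if_pos hTA, hTs]
  have r3I : ∀ u : ℝ, (u ∈ Ico (0:ℝ) 1) → (u < β ∨ β + ε ≤ u) → (ε ≤ u) →
      (u < 0 + α ∨ ε + α ≤ u) → (u < β + α ∨ β + ε + α ≤ u) →
      invol T ((((↑·) : ℝ → UnitAddCircle) '' Ico 0 ε) ∪
        (((↑·) : ℝ → UnitAddCircle) '' Ico β (β + ε))) ↑u = ↑u := by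
    intro u hu h1 h2 h3 h4
    have hna : (↑u : UnitAddCircle) ∉ (((↑·) : ℝ → UnitAddCircle) '' Ico 0 ε) ∪
        (((↑·) : ℝ → UnitAddCircle) '' Ico β (β + ε)) := by
      rintro (hm | hm)
      · exact ni hu le_rfl (by linarith) (Or.inr h2) hm
      · exact ni hu (by linarith) (by linarith) h1 hm
    have hnTA : (↑u : UnitAddCircle) ∉ ⇑T '' ((((↑·) : ℝ → UnitAddCircle) '' Ico 0 ε) ∪
        (((↑·) : ℝ → UnitAddCircle) '' Ico β (β + ε))) := by
      rw [image_union, hTimg, hTimg]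
      rintro (hm | hm)
      · exact ni hu (by linarith) (by linarith) h3 hm
      · exact ni hu (by linarith) (by linarith) h4 hm
    simp only [invol]
    rw [if_neg hna, if_neg hnTA]
  rcases lt_or_ge t ε with c1 | c1
  · -- t ∈ [0, ε)
    rw [ivI t ε (β + ε) ht (by linarith) (by linarith) (by linarith)
        (Or.inl c1) (Or.inl (by linarith)),
      ivP t 0 β ht0 (by linarith), r3P t (Or.inl ⟨c1, ht0⟩)]
  rcases lt_or_ge t β with c2 | c2
  · -- t ∈ [ε, β)
    rw [ivP t ε (β + ε) c1 (by linarith),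
      ivS (t + α) 0 β ⟨by linarith, by linarith⟩ le_rfl (by linarith)
        (Or.inr (by linarith)) (by linarith) (by linarith),
      r3I t ht (Or.inl c2) c1 (Or.inl (by linarith)) (Or.inl (by linarith))]
    congr 1; ring
  rcases lt_or_ge t (β + ε) with c3 | c3
  · -- t ∈ [β, β+ε)
    rw [ivP t ε (β + ε) (by linarith) c3,
      ivI (t + α) 0 β ⟨by linarith, by linarith⟩ le_rfl (by linarith) (by linarith)
        (Or.inr (by linarith)) (Or.inr (by linarith)),
      r3P t (Or.inr ⟨c2, c3⟩)]
  rcases lt_or_ge t α with c4 | c4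
  · -- t ∈ [β+ε, α)
    rw [ivI t ε (β + ε) ht (by linarith) (by linarith) (by linarith)
        (Or.inr c3) (Or.inl (by linarith)),
      ivI t 0 β ht le_rfl (by linarith) (by linarith) (Or.inr (by linarith))
        (Or.inl (by linarith)),
      r3I t ht (Or.inr c3) (by linarith) (Or.inl (by linarith)) (Or.inl (by linarith))]
  rcases lt_or_ge t (α + ε) with c5 | c5
  · -- t ∈ [α, α+ε)
    rw [ivI t ε (β + ε) ht (by linarith) (by linarith) (by linarith)
        (Or.inr (by linarith)) (Or.inl (by linarith)),
      ivS t 0 β ht le_rfl (by linarith) (Or.inr (by linarith)) (by linarith) (by linarith),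
      r3S t ht (Or.inl ⟨by linarith, by linarith⟩)]
  rcases lt_or_ge t (α + β) with c6 | c6
  · -- t ∈ [α+ε, α+β)
    rw [ivS t ε (β + ε) ht (by linarith) (by linarith) (Or.inr (by linarith))
        (by linarith) (by linarith),
      ivP (t - α) 0 β (by linarith) (by linarith),
      r3I t ht (Or.inr (by linarith)) (by linarith) (Or.inr (by linarith))
        (Or.inl (by linarith))]
    congr 1; ring
  rcases lt_or_ge t (α + β + ε) with c7 | c7
  · -- t ∈ [α+β, α+β+ε)
    rw [ivS t ε (β + ε) ht (by linarith) (by linarith) (Or.inr (by linarith))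
        (by linarith) (by linarith),
      ivI (t - α) 0 β ⟨by linarith, by linarith⟩ le_rfl (by linarith) (by linarith)
        (Or.inr (by linarith)) (Or.inl (by linarith)),
      r3S t ht (Or.inr ⟨by linarith, by linarith⟩)]
  · -- t ∈ [α+β+ε, 1)
    rw [ivI t ε (β + ε) ht (by linarith) (by linarith) (by linarith)
        (Or.inr (by linarith)) (Or.inr (by linarith)),
      ivI t 0 β ht le_rfl (by linarith) (by linarith) (Or.inr (by linarith))
        (Or.inr (by linarith)),
      r3I t ht (Or.inr (by linarith)) (by linarith) (Or.inr (by linarith))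
        (Or.inr (by linarith))]
end

section
/- Let (X, μ) be a standard Borel probability space, T : X → X a Borel measure-preserving bijection, and A ⊆ X a Borel set with A ∩ T(A) = ∅. If S : X → X is a Borel measure-preserving bijection such that for μ-almost every x, S(x) ∈ {x, T_A(x)}, then there is a Borel set A' ⊆ A such that S(x) = T_{A'}(x) for μ-almost every x. -/
/-!
Take `A' = A ∩ {S = T}`. Off `A ∪ T(A)` both `S` and `T_{A'}` are the identity, and on `A` they
agree by the choice of `A'`. A point `T a` with `a ∈ A` is sent by `S` to `T a` or to `a`;
injectivity of `S` decides which: if `a ∈ A'` then `S a = T a`, so `S (T a) = a`, and otherwise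
`S a = a`, so `S (T a) = T a`. The latter uses the hypothesis on `S` at `T⁻¹ x`, which holds
almost everywhere because `T⁻¹` is measure preserving, by the Lusin–Souslin theorem.
-/

open MeasureTheory Set

section

variable {X : Type*} {T : Equiv.Perm X} {A : Set X} {x : X}

namespace invol

theorem apply_of_mem (hx : x ∈ A) : invol T A x = T x := if_pos hx

theorem apply_of_notMem (hxA : x ∉ A) (hxTA : x ∉ ⇑T '' A) : invol T A x = x := by
  simp only [invol, if_neg hxA, if_neg hxTA]

theorem apply_image (hdisj : Disjoint A (⇑T '' A)) {a : X} (ha : a ∈ A) :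
    invol T A (T a) = a := by
  have hTa : T a ∉ A := fun h => hdisj.le_bot ⟨h, a, ha, rfl⟩
  simp only [invol, if_neg hTa, if_pos (mem_image_of_mem _ ha), Equiv.symm_apply_apply]

end invol

theorem eq_invol_inter_of_local {S : X → X} (hS : Function.Injective S)
    (hdisj : Disjoint A (⇑T '' A)) (hx : S x = x ∨ S x = invol T A x)
    (hx' : S (T.symm x) = T.symm x ∨ S (T.symm x) = invol T A (T.symm x)) :
    S x = invol T (A ∩ {y | S y = T y}) x := by
  set A' := A ∩ {y | S y = T y}
  have hTA' : ⇑T '' A' ⊆ ⇑T '' A := image_mono inter_subset_left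
  by_cases hxA : x ∈ A
  · by_cases hxA' : x ∈ A'
    · rw [invol.apply_of_mem hxA']
      exact hxA'.2
    · have hxTA : x ∉ ⇑T '' A := fun h => hdisj.le_bot ⟨hxA, h⟩
      rw [invol.apply_of_notMem hxA' fun h => hxTA (hTA' h)]
      exact hx.resolve_right fun h => hxA' ⟨hxA, h.trans (invol.apply_of_mem hxA)⟩
  by_cases hxTA : x ∈ ⇑T '' A
  · obtain ⟨a, ha, rfl⟩ := hxTA
    have hane : a ≠ T a := fun h => hdisj.le_bot ⟨ha, a, ha, h.symm⟩
    have hTaA' : T a ∉ A' := fun h => hxA h.1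
    rw [invol.apply_image hdisj ha] at hx
    rw [Equiv.symm_apply_apply, invol.apply_of_mem ha] at hx'
    by_cases haA' : a ∈ A'
    · rw [invol.apply_image (hdisj.mono inter_subset_left hTA') haA']
      exact hx.resolve_left fun h => hane (hS (haA'.2.trans h.symm))
    · have hSa : S a = a := hx'.resolve_right fun h => haA' ⟨ha, h⟩
      have hTaTA' : T a ∉ ⇑T '' A' := by simpa using haA'
      rw [invol.apply_of_notMem hTaA' hTaTA']
      exact hx.resolve_right fun h => hane (hS (h.trans hSa.symm)).symm
  · rw [invol.apply_of_notMem (fun h => hxA h.1) fun h => hxTA (hTA' h)]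
    simpa only [invol.apply_of_notMem hxA hxTA, or_self] using hx

end

theorem MeasureTheory.MeasurePreserving.ae_comp_symm {α β : Type*} [MeasurableSpace α]
    [StandardBorelSpace α] [MeasurableSpace β] [MeasurableSpace.CountablySeparated β]
    {μ : Measure α} {ν : Measure β} {e : α ≃ β} (he : MeasurePreserving e μ ν) {p : α → Prop}
    (h : ∀ᵐ x ∂μ, p x) : ∀ᵐ y ∂ν, p (e.symm y) := by
  rw [← he.map_eq, (he.measurable.measurableEmbedding e.injective).ae_map_iff]
  simpa only [Equiv.symm_apply_apply] using h

theorem stmt7_general {X : Type*} [MeasurableSpace X] [StandardBorelSpace X]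
    (μ : Measure X)
    (T : Equiv.Perm X)
    (hTμ : MeasurePreserving T μ μ)
    (A : Set X) (hA : MeasurableSet A) (hdisj : Disjoint A (⇑T '' A))
    (S : Equiv.Perm X) (hS : Measurable S)
    (hSloc : ∀ᵐ x ∂μ, S x = x ∨ S x = invol T A x) :
    ∃ A' : Set X, A' ⊆ A ∧ MeasurableSet A' ∧ ∀ᵐ x ∂μ, S x = invol T A' x := by
  refine ⟨A ∩ {y | S y = T y}, inter_subset_left,
    hA.inter (measurableSet_eq_fun hS hTμ.measurable), ?_⟩
  filter_upwards [hSloc, hTμ.ae_comp_symm hSloc] with x hx hx'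
  exact eq_invol_inter_of_local S.injective hdisj hx hx'

theorem stmt7 {X : Type*} [MeasurableSpace X] [StandardBorelSpace X]
    (μ : Measure X) [IsProbabilityMeasure μ]
    (T : Equiv.Perm X) (hT : Measurable T) (hT' : Measurable T.symm)
    (hTμ : MeasurePreserving T μ μ)
    (A : Set X) (hA : MeasurableSet A) (hdisj : Disjoint A (⇑T '' A))
    (S : Equiv.Perm X) (hS : Measurable S) (hS' : Measurable S.symm)
    (hSμ : MeasurePreserving S μ μ)
    (hSloc : ∀ᵐ x ∂μ, S x = x ∨ S x = invol T A x) :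
    ∃ A' : Set X, A' ⊆ A ∧ MeasurableSet A' ∧ ∀ᵐ x ∂μ, S x = invol T A' x :=
  stmt7_general μ T hTμ A hA hdisj S hS hSloc
end

section
/- Let α ∈ (0,1) be irrational, T(x) = x + α the rotation of ℝ/ℤ, and β ∈ (0,α) irrational. Then for every γ ∈ ℝ/ℤ (with the interval [γ, γ+β) disjoint from its T-image) and every δ > 0, there exists k ∈ ℤ such that λ({x : (T^k ∘ T_{[0,β)} ∘ T^{-k})(x) ≠ T_{[γ, γ+β)}(x)}) < δ; that is, every involution T_{[γ,γ+β)} lies in the uniform closure of the set of conjugates of T_{[0,β)} by powers of T. -/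
open MeasureTheory Set

/-! Conjugating `T_A` by a power `T^k` gives `T_{A + kα}`, and two involutions `T_A`, `T_B`
agree outside `(A ∆ B) ∪ T(A ∆ B)`. Since `ℤα` is dense in the circle, `γ = kα + u` for some
`k` and some small `u > 0`; then `[kα, kα + β) ∆ [γ, γ + β)` is covered by two arcs of length
`u`, so `T^k ∘ T_{[0,β)} ∘ T^{-k}` and `T_{[γ,γ+β)}` differ on a set of measure at most `4u`. -/

open scoped symmDiff

theorem Set.symmDiff_image_subset {α β : Type*} (f : α → β) (s t : Set α) :
    (f '' s) ∆ (f '' t) ⊆ f '' (s ∆ t) := by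
  rintro _ (⟨⟨x, hx, rfl⟩, hxt⟩ | ⟨⟨x, hx, rfl⟩, hxs⟩)
  · exact ⟨x, .inl ⟨hx, fun h => hxt ⟨x, h, rfl⟩⟩, rfl⟩
  · exact ⟨x, .inr ⟨hx, fun h => hxs ⟨x, h, rfl⟩⟩, rfl⟩

section Involution

variable {X : Type*} (T : Equiv.Perm X)

theorem invol_conj {S : Equiv.Perm X} (hST : Commute S T) (A : Set X) :
    ⇑S ∘ invol T A ∘ ⇑S⁻¹ = invol T (S '' A) := by
  have hST' : ∀ y, S (T y) = T (S y) := fun y => congrFun (congrArg DFunLike.coe hST.eq) y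
  have hST'' : ∀ y, S (T.symm y) = T.symm (S y) := fun y =>
    congrFun (congrArg DFunLike.coe hST.inv_right.eq) y
  funext x
  have hA : x ∈ S '' A ↔ S.symm x ∈ A := by rw [S.image_eq_preimage_symm]; rfl
  have hTA : x ∈ T '' (S '' A) ↔ S.symm x ∈ T '' A := by
    rw [image_image, ← image_congr fun y _ => hST' y, ← image_image, S.image_eq_preimage_symm]
    rfl
  simp only [Function.comp_apply, invol, Equiv.Perm.coe_inv]
  split_ifs <;> simp_all

theorem setOf_invol_ne_subset (A B : Set X) :
    {x | invol T A x ≠ invol T B x} ⊆ A ∆ B ∪ T '' (A ∆ B) := by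
  intro x hx
  rw [image_symmDiff T.injective]
  by_contra h
  simp only [mem_union, mem_symmDiff, not_or, not_and, not_not] at h
  apply hx
  simp only [invol]
  split_ifs <;> tauto

end Involution

namespace AddCircle

theorem exists_eq_zsmul_add_coe_of_irrational {p a : ℝ} (ha : Irrational (a / p))
    (γ : AddCircle p) {ε : ℝ} (hε : 0 < ε) :
    ∃ k : ℤ, ∃ u ∈ Ioo 0 ε, γ = k • (a : AddCircle p) + u := by
  have hU : IsOpen ((γ - ·) ⁻¹' ((↑) '' Ioo 0 ε : Set (AddCircle p))) :=
    (QuotientAddGroup.isOpenMap_coe _ isOpen_Ioo).preimage (continuous_sub_left γ)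
  obtain ⟨k, u, hu, hk⟩ := (denseRange_zsmul_coe_iff.mpr ha).exists_mem_open hU
    ⟨γ - ↑(ε / 2), ε / 2, ⟨half_pos hε, half_lt_self hε⟩, (sub_sub_cancel γ _).symm⟩
  exact ⟨k, u, hu, eq_add_of_sub_eq' hk.symm⟩

theorem image_add_coe_coe_image_Ico {p : ℝ} (a b t : ℝ) :
    (· + (t : AddCircle p)) '' ((↑) '' Ico a b) = (↑) '' Ico (a + t) (b + t) := by
  rw [image_image, ← image_add_const_Ico, image_image]
  simp only [coe_add]

variable {p : ℝ} [Fact (0 < p)]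

theorem volume_coe_image_Ico_le (a u : ℝ) :
    volume ((↑) '' Ico a (a + u) : Set (AddCircle p)) ≤ ENNReal.ofReal u := by
  have hsub : ((↑) '' Ico a (a + u) : Set (AddCircle p)) ⊆
      Metric.closedBall ↑(a + u / 2) (u / 2) := by
    rintro _ ⟨s, hs, rfl⟩
    rw [Metric.mem_closedBall, dist_eq_norm, ← coe_sub]
    refine QuotientAddGroup.norm_mk_le_norm.trans ?_
    rw [Real.norm_eq_abs, abs_le]
    constructor <;> linarith [hs.1, hs.2]
  calc _ ≤ _ := measure_mono hsub
    _ = ENNReal.ofReal (min p (2 * (u / 2))) := volume_closedBall _ _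
    _ ≤ ENNReal.ofReal u := ENNReal.ofReal_le_ofReal (by linarith [min_le_right p (2 * (u / 2))])

theorem volume_coe_image_Ico_symmDiff_le (a b : ℝ) {u : ℝ} (hu : 0 ≤ u) :
    volume (((↑) '' Ico a b : Set (AddCircle p)) ∆ ((↑) '' Ico (a + u) (b + u))) ≤
      ENNReal.ofReal (2 * u) := by
  have hIco : Ico a b ∆ Ico (a + u) (b + u) ⊆ Ico a (a + u) ∪ Ico b (b + u) := by
    rintro x (⟨⟨h1, h2⟩, h3⟩ | ⟨⟨h1, h2⟩, h3⟩)
    · exact .inl ⟨h1, lt_of_not_ge fun h => h3 ⟨h, by linarith⟩⟩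
    · exact .inr ⟨le_of_not_gt fun h => h3 ⟨by linarith, h⟩, h2⟩
  calc _ ≤ volume (((↑) '' Ico a (a + u) : Set (AddCircle p)) ∪ (↑) '' Ico b (b + u)) :=
        measure_mono ((symmDiff_image_subset _ _ _).trans (image_union .. ▸ image_mono hIco))
    _ ≤ ENNReal.ofReal u + ENNReal.ofReal u :=
        (measure_union_le _ _).trans (add_le_add (volume_coe_image_Ico_le a u)
          (volume_coe_image_Ico_le b u))
    _ = ENNReal.ofReal (2 * u) := by rw [← ENNReal.ofReal_add hu hu, two_mul]

end AddCircle

theorem stmt10_general (α : ℝ) (hαirr : Irrational α)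
    (β : ℝ)
    (T : Equiv.Perm UnitAddCircle) (hT : ⇑T = fun x => x + (α : UnitAddCircle))
    (γ : UnitAddCircle)
    (δ : ENNReal) (hδ : 0 < δ) :
    ∃ k : ℤ,
      volume {x | (⇑(T ^ k) ∘ invol T (((↑·) : ℝ → UnitAddCircle) '' Ico 0 β) ∘ ⇑(T ^ (-k))) x ≠
        invol T ((γ + ·) '' (((↑·) : ℝ → UnitAddCircle) '' Ico 0 β)) x} < δ := by
  obtain ⟨r, -, hr, hrδ⟩ := ENNReal.lt_iff_exists_real_btwn.mp hδ
  obtain ⟨k, u, ⟨hu, hur⟩, rfl⟩ := AddCircle.exists_eq_zsmul_add_coe_of_irrational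
    (p := 1) (by rwa [div_one]) γ (by linarith [ENNReal.ofReal_pos.mp hr] : 0 < r / 4)
  set A : Set UnitAddCircle := (↑) '' Ico 0 β
  set c : UnitAddCircle := k • (α : UnitAddCircle)
  have hconj : ⇑(T ^ k) ∘ invol T A ∘ ⇑(T ^ (-k)) = invol T ((· + c) '' A) := by
    have hTk : T ^ k = Equiv.addRight c := by
      rw [show T = Equiv.addRight (α : UnitAddCircle) from Equiv.coe_fn_injective hT,
        Equiv.zsmul_addRight]
    rw [zpow_neg, invol_conj T ((Commute.refl T).zpow_left k), hTk]
    rfl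
  set D := ((· + c) '' A) ∆ ((c + u + ·) '' A) with hDdef
  have hD : volume D ≤ ENNReal.ofReal (2 * u) := by
    have hB : (c + u + ·) '' A = (· + c) '' ((· + (u : UnitAddCircle)) '' A) := by
      rw [image_image (· + c)]
      exact image_congr fun x _ => by abel
    rw [hDdef, hB, ← image_symmDiff (add_left_injective c), image_add_right,
      measure_preimage_add_right, AddCircle.image_add_coe_coe_image_Ico]
    exact AddCircle.volume_coe_image_Ico_symmDiff_le 0 β hu.le
  have hTD : volume (T '' D) = volume D := by
    rw [hT, image_add_right, measure_preimage_add_right]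
  refine ⟨k, lt_of_le_of_lt ?_ hrδ⟩
  calc _ ≤ volume (D ∪ T '' D) := measure_mono (hconj ▸ setOf_invol_ne_subset T _ _)
    _ ≤ volume D + volume D := (measure_union_le _ _).trans_eq (by rw [hTD])
    _ ≤ ENNReal.ofReal (2 * u) + ENNReal.ofReal (2 * u) := add_le_add hD hD
    _ ≤ ENNReal.ofReal r := by
      rw [← ENNReal.ofReal_add (by linarith) (by linarith)]
      exact ENNReal.ofReal_le_ofReal (by linarith)

theorem stmt10 (α : ℝ) (hαirr : Irrational α) (hα0 : 0 < α) (hα1 : α < 1)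
    (β : ℝ) (hβirr : Irrational β) (hβ0 : 0 < β) (hβα : β < α)
    (T : Equiv.Perm UnitAddCircle) (hT : ⇑T = fun x => x + (α : UnitAddCircle))
    (γ : UnitAddCircle)
    (harc : Disjoint ((γ + ·) '' (((↑·) : ℝ → UnitAddCircle) '' Ico 0 β))
      (⇑T '' ((γ + ·) '' (((↑·) : ℝ → UnitAddCircle) '' Ico 0 β))))
    (δ : ENNReal) (hδ : 0 < δ) :
    ∃ k : ℤ,
      volume {x | (⇑(T ^ k) ∘ invol T (((↑·) : ℝ → UnitAddCircle) '' Ico 0 β) ∘ ⇑(T ^ (-k))) x ≠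
        invol T ((γ + ·) '' (((↑·) : ℝ → UnitAddCircle) '' Ico 0 β)) x} < δ :=
  stmt10_general α hαirr β T hT γ δ hδ
end
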